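/- In the groupoid with objects {A, Ā, A*, Ā*} and morphisms contained in U = B × B × {±1} × {±1} × Sym(3), the subgroupoid generated by the morphisms (B,B,+1,+1,id) for all B, (B,B,+1,+1,(1 2 3)) for all B, (A,Ā,−1,+1,id), (A*,Ā*,−1,+1,id), (A,A*,−1,−1,id), (Ā,Ā*,−1,−1,id), (A,Ā*,+1,+1,(2 3)), and (Ā,A*,+1,+1,(2 3)) has exactly 96 morphisms; moreover, for fixed domain, codomain, orientation character ε, and boundary character δ, the set of tangle permutations σ realized is either empty, equal to the alternating group A3, or equal to the coset (1 2)·A3. -/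
import Mathlib


open scoped Pointwise

/-- A morphism type: (domain block, codomain block, orientation character,
boundary character, tangle permutation).  The four blocks A, Ā, A*, Ā* are
modeled by `0, 1, 2, 3 : Fin 4`. -/
structure Mor where
  dom : Fin 4
  cod : Fin 4
  eps : ℤˣ
  del : ℤˣ
  sig : Equiv.Perm (Fin 3)

namespace Mor

def comp (g f : Mor) : Mor := ⟨f.dom, g.cod, f.eps * g.eps, f.del * g.del, g.sig * f.sig⟩

def inv (f : Mor) : Mor := ⟨f.cod, f.dom, f.eps, f.del, f.sig⁻¹⟩

end Mor

/-- The subgroupoid generated by: identities (B,B,+1,+1,id); rotations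
(B,B,+1,+1,(1 2 3)); the reflections (A,Ā,−1,+1,id) and (A*,Ā*,−1,+1,id);
the inversions (A,A*,−1,−1,id) and (Ā,Ā*,−1,−1,id); and the π-rotations
(A,Ā*,+1,+1,(2 3)) and (Ā,A*,+1,+1,(2 3)); closed under inverses and
well-defined compositions. Permutations of `Fin 3` are written 0-based, so
(1 2 3) is `finRotate 3` and (2 3) is `Equiv.swap 1 2`. -/
inductive Gen : Mor → Prop
  | id (B : Fin 4) : Gen ⟨B, B, 1, 1, 1⟩
  | rot (B : Fin 4) : Gen ⟨B, B, 1, 1, finRotate 3⟩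
  | refl₁ : Gen ⟨0, 1, -1, 1, 1⟩
  | refl₂ : Gen ⟨2, 3, -1, 1, 1⟩
  | inversion₁ : Gen ⟨0, 2, -1, -1, 1⟩
  | inversion₂ : Gen ⟨1, 3, -1, -1, 1⟩
  | rotx₁ : Gen ⟨0, 3, 1, 1, Equiv.swap 1 2⟩
  | rotx₂ : Gen ⟨1, 2, 1, 1, Equiv.swap 1 2⟩
  | inv {f : Mor} : Gen f → Gen f.inv
  | comp {f g : Mor} : Gen f → Gen g → f.cod = g.dom → Gen (g.comp f)

deriving instance DecidableEq for Mor

instance : Fintype Mor :=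
  Fintype.ofEquiv (Fin 4 × Fin 4 × ℤˣ × ℤˣ × Equiv.Perm (Fin 3))
    { toFun := fun x => ⟨x.1, x.2.1, x.2.2.1, x.2.2.2.1, x.2.2.2.2⟩
      invFun := fun m => (m.dom, m.cod, m.eps, m.del, m.sig)
      left_inv := fun _ => rfl
      right_inv := fun _ => rfl }

def chi : Fin 4 → ℤˣ := ![1, -1, -1, 1]
def phi : Fin 4 → ℤˣ := ![1, 1, -1, -1]

def P (f : Mor) : Prop :=
  f.eps = chi f.dom * chi f.cod ∧ Equiv.Perm.sign f.sig = f.del * phi f.dom * phi f.cod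

instance : DecidablePred P := fun _ => inferInstanceAs (Decidable (_ ∧ _))

lemma gen_p {f : Mor} (h : Gen f) : P f := by
  induction h with
  | id B => revert B; decide
  | rot B => revert B; decide
  | refl₁ => decide
  | refl₂ => decide
  | inversion₁ => decide
  | inversion₂ => decide
  | rotx₁ => decide
  | rotx₂ => decide
  | inv h ih =>
      obtain ⟨h1, h2⟩ := ih
      refine ⟨?_, ?_⟩
      · simpa [Mor.inv, mul_comm] using h1
      · simp only [Mor.inv]
        rw [map_inv, (by decide : ∀ u : ℤˣ, u⁻¹ = u) _, h2]
        exact (by decide : ∀ a b c : ℤˣ, a * b * c = a * c * b) _ _ _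
  | comp hf hg hco ihf ihg =>
      obtain ⟨f1, f2⟩ := ihf
      obtain ⟨g1, g2⟩ := ihg
      refine ⟨?_, ?_⟩
      · simp only [Mor.comp]
        rw [f1, g1, hco]
        exact (by decide : ∀ a b c : ℤˣ, (a * b) * (b * c) = a * c) _ _ _
      · simp only [Mor.comp, map_mul]
        rw [f2, g2, hco]
        exact (by decide : ∀ a b x y z : ℤˣ, (x * b * y) * (z * a * b) = (z * x) * a * y)
          _ _ _ _ _

lemma gen_of_eq {f g : Mor} (h : Gen f) (e : f = g) : Gen g := e ▸ h

lemma even_loop (B : Fin 4) (τ : Equiv.Perm (Fin 3)) (hτ : Equiv.Perm.sign τ = 1) :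
    Gen ⟨B, B, 1, 1, τ⟩ := by
  have h : τ = 1 ∨ τ = finRotate 3 ∨ τ = (finRotate 3)⁻¹ := by revert hτ; revert τ; decide
  rcases h with rfl | rfl | rfl
  · exact Gen.id B
  · exact Gen.rot B
  · exact Gen.inv (Gen.rot B)

lemma ell : Gen ⟨0, 0, 1, -1, Equiv.swap 1 2⟩ := by
  have h1 := Gen.comp Gen.inversion₁ Gen.refl₂ rfl
  have h2 := Gen.comp h1 (Gen.inv Gen.rotx₁) rfl
  exact gen_of_eq h2 (by decide)

lemma loop0 (δ : ℤˣ) (τ : Equiv.Perm (Fin 3)) (h : Equiv.Perm.sign τ = δ) :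
    Gen ⟨0, 0, 1, δ, τ⟩ := by
  rcases Int.units_eq_one_or δ with rfl | rfl
  · exact even_loop 0 τ h
  · have hx : Equiv.Perm.sign (τ * Equiv.swap 1 2) = 1 := by
      rw [map_mul, h, Equiv.Perm.sign_swap (by decide)]; decide
    have h2 := Gen.comp ell (even_loop 0 _ hx) rfl
    apply gen_of_eq h2
    simp [Mor.comp, mul_assoc, Equiv.swap_mul_self]

def path : Fin 4 → Mor
  | 0 => ⟨0, 0, 1, 1, 1⟩
  | 1 => ⟨0, 1, -1, 1, 1⟩
  | 2 => ⟨0, 2, -1, -1, 1⟩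
  | 3 => ⟨0, 3, 1, 1, Equiv.swap 1 2⟩

lemma gen_path : ∀ b, Gen (path b)
  | 0 => Gen.id 0
  | 1 => Gen.refl₁
  | 2 => Gen.inversion₁
  | 3 => Gen.rotx₁

lemma path_dom : ∀ b, (path b).dom = 0 := by decide
lemma path_cod : ∀ b, (path b).cod = b := by decide
lemma path_eps : ∀ b, (path b).eps = chi b := by decide
lemma path_key : ∀ b, Equiv.Perm.sign (path b).sig * phi b = (path b).del := by decide

lemma sandwich (p q : Mor) (hp : Gen p) (hq : Gen q) (hpd : p.dom = 0) (hqd : q.dom = 0)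
    (δ₀ : ℤˣ) (τ : Equiv.Perm (Fin 3)) (hτ : Equiv.Perm.sign τ = δ₀) :
    Gen ⟨p.cod, q.cod, p.eps * q.eps, p.del * δ₀ * q.del, q.sig * τ * p.sig⁻¹⟩ := by
  have L := loop0 δ₀ τ hτ
  have h1 := Gen.comp (Gen.inv hp) L (by simpa [Mor.inv] using hpd)
  have h2 := Gen.comp h1 hq (by simpa [Mor.comp] using hqd.symm)
  apply gen_of_eq h2
  simp [Mor.comp, Mor.inv, mul_assoc]

lemma p_gen {f : Mor} (h : P f) : Gen f := by
  obtain ⟨d, c, ε, δ, σ⟩ := f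
  obtain ⟨h1, h2⟩ := h
  simp only at h1 h2
  have hτ : Equiv.Perm.sign ((path c).sig⁻¹ * σ * (path d).sig)
      = δ * (path d).del * (path c).del := by
    rw [map_mul, map_mul, map_inv, h2, ← path_key d, ← path_key c]
    exact (by decide : ∀ a b x y z : ℤˣ, b⁻¹ * (z * x * y) * a = z * (a * x) * (b * y))
      _ _ _ _ _
  have := sandwich (path d) (path c) (gen_path d) (gen_path c) (path_dom d) (path_dom c)
    _ _ hτ
  apply gen_of_eq this
  simp only [Mor.mk.injEq]
  refine ⟨path_cod d, path_cod c, ?_, ?_, ?_⟩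
  · rw [path_eps, path_eps, h1]
  · exact (by decide : ∀ a b δ : ℤˣ, a * (δ * a * b) * b = δ) _ _ _
  · group

lemma genIff (f : Mor) : Gen f ↔ P f := ⟨gen_p, p_gen⟩


/-- The generated subgroupoid has exactly 96 morphisms, and for fixed domain,
codomain, orientation character and boundary character, the set of realized
tangle permutations is empty, the alternating group A₃, or the coset (1 2)·A₃. -/
theorem generated_subgroupoid_card_and_cosets :
    Nat.card {f : Mor // Gen f} = 96 ∧
    ∀ (d c : Fin 4) (ε δ : ℤˣ),
      {σ : Equiv.Perm (Fin 3) | Gen ⟨d, c, ε, δ, σ⟩} = ∅ ∨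
      {σ : Equiv.Perm (Fin 3) | Gen ⟨d, c, ε, δ, σ⟩} =
        (alternatingGroup (Fin 3) : Set (Equiv.Perm (Fin 3))) ∨
      {σ : Equiv.Perm (Fin 3) | Gen ⟨d, c, ε, δ, σ⟩} =
        (Equiv.swap (0 : Fin 3) 1) • (alternatingGroup (Fin 3) : Set (Equiv.Perm (Fin 3))) := by
  constructor
  · have e : {f : Mor // Gen f} ≃ {f : Mor // P f} := Equiv.subtypeEquivRight fun f => genIff f
    rw [Nat.card_congr e, Nat.card_eq_fintype_card]
    decide
  · intro d c ε δ
    by_cases hε : ε = chi d * chi c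
    · rcases Int.units_eq_one_or (δ * phi d * phi c) with hs | hs
      · right; left
        ext σ
        simp only [Set.mem_setOf_eq, genIff, P, SetLike.mem_coe,
          Equiv.Perm.mem_alternatingGroup, hs]
        exact ⟨fun h => h.2, fun h => ⟨hε, h⟩⟩
      · right; right
        ext σ
        rw [Set.mem_smul_set_iff_inv_smul_mem]
        simp only [Set.mem_setOf_eq, genIff, P, SetLike.mem_coe,
          Equiv.Perm.mem_alternatingGroup, hs, smul_eq_mul, map_mul]
        rw [map_inv, Equiv.Perm.sign_swap (by decide)]
        constructor
        · intro h; rw [h.2]; decide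
        · intro h
          refine ⟨hε, ?_⟩
          rcases Int.units_eq_one_or (Equiv.Perm.sign σ) with h' | h'
          · rw [h'] at h; exact absurd h (by decide)
          · rw [h']
    · left
      ext σ
      simp only [Set.mem_setOf_eq, Set.mem_empty_iff_false, iff_false]
      intro h
      exact hε (gen_p h).1
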